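/- arXiv:0806.3452 — 4 statements merged into one kernel-verified Lean document; each statement's English description precedes it below -/
import Mathlib

section
/- Let ω = e^{πi/3} and let x = a + bω ∈ ℤ[ω] with a, b ∈ ℤ. If 2ab + b² = ±4, then x² = -4 + 4ω or x² = -4ω. -/
/-!
Since `ω³ = e^{πi} = -1` and `ω ≠ -1`, `ω` is a root of `x² - x + 1`, whence
`(a + bω)² = (a² - b²) + (2ab + b²)ω`. If `b(2a + b) = ±4` then `b = 2c` with `c(a + c) = ±1`,
so `c = ±1` and `a + c = ±c`: either `a = 0`, giving `a² - b² = -4`, or `a = -b`, giving `a² - b² = 0`.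
-/

noncomputable def omega : ℂ := Complex.exp (Real.pi * Complex.I / 3)

lemma omega_pow_three : omega ^ 3 = -1 := by
  rw [omega, ← Complex.exp_nat_mul, ← Complex.exp_pi_mul_I]
  ring_nf

lemma omega_re : omega.re = 1 / 2 := by
  rw [omega, Complex.exp_re]
  simp

lemma omega_sq : omega ^ 2 = omega - 1 := by
  have hne : omega + 1 ≠ 0 := fun h => by
    have := congrArg Complex.re h
    norm_num [omega_re] at this
  have hfactor : (omega + 1) * (omega ^ 2 - omega + 1) = 0 := by
    linear_combination omega_pow_three
  linear_combination (mul_eq_zero.mp hfactor).resolve_left hne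

lemma sq_add_mul_of_sq_eq_sub_one {R : Type*} [CommRing R] {w : R} (hw : w ^ 2 = w - 1)
    (a b : R) : (a + b * w) ^ 2 = (a ^ 2 - b ^ 2) + (2 * a * b + b ^ 2) * w := by
  linear_combination b ^ 2 * hw

lemma even_of_two_mul_mul_add_sq_eq_two_mul {a b k : ℤ} (h : 2 * a * b + b ^ 2 = 2 * k) :
    Even b := by
  have : Even (b ^ 2) := ⟨k - a * b, by linarith⟩
  exact (Int.even_pow.mp this).1

lemma sq_sub_sq_of_two_mul_mul_add_sq_eq_four {a b : ℤ} (h : 2 * a * b + b ^ 2 = 4) :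
    a ^ 2 - b ^ 2 = -4 := by
  obtain ⟨c, rfl⟩ := even_of_two_mul_mul_add_sq_eq_two_mul (k := 2) h
  have hc : c * (a + c) = 1 := by linarith
  rcases Int.eq_one_or_neg_one_of_mul_eq_one' hc with ⟨rfl, _⟩ | ⟨rfl, _⟩ <;> nlinarith

lemma sq_eq_sq_of_two_mul_mul_add_sq_eq_neg_four {a b : ℤ} (h : 2 * a * b + b ^ 2 = -4) :
    a ^ 2 = b ^ 2 := by
  obtain ⟨c, rfl⟩ := even_of_two_mul_mul_add_sq_eq_two_mul (k := -2) h
  have hc : c * -(a + c) = 1 := by linarith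
  rcases Int.eq_one_or_neg_one_of_mul_eq_one' hc with ⟨rfl, _⟩ | ⟨rfl, _⟩ <;> nlinarith

theorem stmt_3 (a b : ℤ) (h : 2*a*b + b^2 = 4 ∨ 2*a*b + b^2 = -4) :
    ((a : ℂ) + b * omega)^2 = -4 + 4*omega ∨ ((a : ℂ) + b * omega)^2 = -4*omega := by
  rw [sq_add_mul_of_sq_eq_sub_one omega_sq]
  rcases h with h | h
  · have hsq : ((a : ℂ) ^ 2 - b ^ 2) = -4 := by
      exact_mod_cast sq_sub_sq_of_two_mul_mul_add_sq_eq_four h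
    have hlin : (2 * (a : ℂ) * b + b ^ 2) = 4 := by exact_mod_cast h
    left
    rw [hsq, hlin]
  · have hsq : ((a : ℂ) ^ 2 - b ^ 2) = 0 := by
      rw [sub_eq_zero]; exact_mod_cast sq_eq_sq_of_two_mul_mul_add_sq_eq_neg_four h
    have hlin : (2 * (a : ℂ) * b + b ^ 2) = -4 := by exact_mod_cast h
    right
    rw [hsq, hlin, zero_add]
end

section
/- Suppose x ∈ ℤ[ω] (ω = e^{πi/3}) and x² = ω^{n-m} + ω^m + 4 for some n ∈ {1,2,3,4,5} and m ∈ {0,1,2,4,5}. Then x² = 4, i.e., x = ±2. -/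
lemma omega_eq : omega = 1 / 2 + (Real.sqrt 3 / 2 : ℝ) * Complex.I := by
  rw [omega, show (Real.pi : ℂ) * Complex.I / 3 = (Real.pi / 3 : ℝ) * Complex.I by push_cast; ring,
    Complex.exp_mul_I, ← Complex.ofReal_cos, ← Complex.ofReal_sin,
    Real.cos_pi_div_three, Real.sin_pi_div_three]
  push_cast; ring

lemma omega_im : omega.im = Real.sqrt 3 / 2 := by simp [omega_eq]

lemma omega_ne_zero : omega ≠ 0 := Complex.exp_ne_zero _

lemma omega_pow_six : omega ^ 6 = 1 := by
  linear_combination (omega ^ 3 - 1) * omega_pow_three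

lemma normSq_add_mul_omega (a b : ℝ) : Complex.normSq (a + b * omega) = a ^ 2 + a * b + b ^ 2 := by
  have hre : (a + b * omega).re = a + b * (1 / 2) := by simp [omega_re]
  have him : (a + b * omega).im = b * (Real.sqrt 3 / 2) := by simp [omega_im]
  rw [Complex.normSq_apply, hre, him]
  linear_combination (b ^ 2 / 4) * Real.sq_sqrt (show (0 : ℝ) ≤ 3 by norm_num)

def omegaPowCoords (k : ℤ) : ℤ × ℤ :=
  match k % 6 with
  | 0 => (1, 0)
  | 1 => (0, 1)
  | 2 => (-1, 1)
  | 3 => (-1, 0)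
  | 4 => (0, -1)
  | _ => (1, -1)

lemma omega_zpow_emod_six (k : ℤ) : omega ^ k = omega ^ (k % 6) := by
  conv_lhs => rw [← Int.emod_add_mul_ediv k 6, zpow_add₀ omega_ne_zero, zpow_mul]
  simp [omega_pow_six]

lemma omega_zpow (k : ℤ) : omega ^ k = (omegaPowCoords k).1 + (omegaPowCoords k).2 * omega := by
  rw [omega_zpow_emod_six, omegaPowCoords]
  have h0 : 0 ≤ k % 6 := Int.emod_nonneg k (by norm_num)
  have h6 : k % 6 < 6 := Int.emod_lt_of_pos k (by norm_num)
  interval_cases k % 6 <;>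
    simp only [zpow_ofNat, Int.reduceNeg, Int.cast_neg, Int.cast_one, Int.cast_zero] <;>
    grind [omega_sq]

def eisensteinNorm (z : ℤ × ℤ) : ℤ := z.1 ^ 2 + z.1 * z.2 + z.2 ^ 2

lemma isSquare_eisensteinNorm_of_sq_eq {a b : ℤ} {z : ℤ × ℤ}
    (h : ((a : ℂ) + b * omega) ^ 2 = z.1 + z.2 * omega) : IsSquare (eisensteinNorm z) := by
  have hnorm := congrArg Complex.normSq h
  simp only [map_pow, ← Complex.ofReal_intCast, normSq_add_mul_omega] at hnorm
  exact ⟨a ^ 2 + a * b + b ^ 2, by rw [eisensteinNorm, ← sq]; exact_mod_cast hnorm.symm⟩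

lemma eq_of_isSquare_eisensteinNorm :
    ∀ n ∈ ({1, 2, 3, 4, 5} : Finset ℤ), ∀ m ∈ ({0, 1, 2, 4, 5} : Finset ℤ),
      IsSquare (eisensteinNorm (omegaPowCoords (n - m) + omegaPowCoords m + (4, 0))) →
        omegaPowCoords (n - m) + omegaPowCoords m + (4, 0) = (4, 0) := by
  decide +kernel

theorem stmt_8 (x : ℂ) (hx : ∃ a b : ℤ, x = a + b * omega)
    (h : ∃ n m : ℤ, n ∈ ({1, 2, 3, 4, 5} : Set ℤ) ∧ m ∈ ({0, 1, 2, 4, 5} : Set ℤ) ∧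
      x^2 = omega ^ (n - m) + omega ^ m + 4) :
    x^2 = 4 ∧ (x = 2 ∨ x = -2) := by
  obtain ⟨a, b, rfl⟩ := hx
  obtain ⟨n, m, hn, hm, hsq⟩ := h
  have hz : ((a : ℂ) + b * omega) ^ 2 = (omegaPowCoords (n - m) + omegaPowCoords m + (4, 0)).1
      + (omegaPowCoords (n - m) + omegaPowCoords m + (4, 0)).2 * omega := by
    rw [hsq, omega_zpow, omega_zpow]; simp only [Prod.fst_add, Prod.snd_add]; push_cast; ring
  have h4 : ((a : ℂ) + b * omega) ^ 2 = 2 ^ 2 := by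
    rw [hz, eq_of_isSquare_eisensteinNorm n (by simpa using hn) m (by simpa using hm)
      (isSquare_eisensteinNorm_of_sq_eq hz)]
    norm_num
  exact ⟨by rw [h4]; norm_num, sq_eq_sq_iff_eq_or_eq_neg.mp h4⟩
end

section
/- Let θ = (1 + i√7)/2 and suppose x ∈ ℤ[θ] satisfies x² ∈ {4, 1+θ, 3+θ, 4+2θ, 4-2θ, 5-θ, 7-θ}. Then x² = 4, i.e., x = ±2. -/
noncomputable def theta : ℂ := (1 + Complex.I * Real.sqrt 7) / 2

/-!
Write `x = a + bθ`. Since `θ² = θ - 2`, `x² = (a² - 2b²) + b(2a + b)θ`, and `1, θ` are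
`ℤ`-independent, so `x² = m + nθ` means `a² - 2b² = m` and `b(2a + b) = n`. For `n = ±1` the
factor `b` is a unit, which forces `a² - 2b² = -2` resp. `-1`; `n = ±2` is impossible because
`b(2a + b) = (a + b)² - a²` is a difference of squares, never `≡ 2 mod 4`; and `n = 0`, `m = 4`
leaves only `b = 0`, `a = ±2`.
-/

open Function

lemma theta_sq : theta ^ 2 = theta - 2 := by
  have h7 : (Real.sqrt 7 : ℂ) ^ 2 = 7 := by
    norm_cast
    rw [Real.sq_sqrt (by norm_num)]
  unfold theta
  linear_combination ((Real.sqrt 7 : ℂ) ^ 2 / 4) * Complex.I_sq - h7 / 4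

lemma theta_im_ne_zero : theta.im ≠ 0 := by
  simp [theta]

lemma Complex.intCast_add_intCast_mul_injective {z : ℂ} (hz : z.im ≠ 0) :
    Injective fun p : ℤ × ℤ => (p.1 : ℂ) + p.2 * z := by
  rintro ⟨m, n⟩ ⟨p, q⟩ h
  have him := congrArg Complex.im h
  have hre := congrArg Complex.re h
  simp only [add_im, add_re, mul_im, mul_re, intCast_re, intCast_im, zero_mul, add_zero,
    zero_add, sub_zero] at him hre
  have hnq : n = q := by exact_mod_cast mul_right_cancel₀ hz him
  subst hnq
  simp only [Prod.mk.injEq, and_true]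
  exact_mod_cast add_right_cancel hre

lemma sq_intCast_add_intCast_mul {R : Type*} [CommRing R] {z : R} (hz : z ^ 2 = z - 2)
    (a b : ℤ) :
    ((a : R) + b * z) ^ 2 = ((a ^ 2 - 2 * b ^ 2 : ℤ) : R) + ((b * (2 * a + b) : ℤ) : R) * z := by
  push_cast
  linear_combination (b : R) ^ 2 * hz

lemma Int.sq_sub_sq_emod_four_ne_two (u v : ℤ) : (u ^ 2 - v ^ 2) % 4 ≠ 2 := by
  intro h
  have h4 : ((u ^ 2 - v ^ 2 : ℤ) : ZMod 4) = 2 := by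
    rw [← Int.emod_add_mul_ediv (u ^ 2 - v ^ 2) 4, h]
    push_cast
    simp [show (4 : ZMod 4) = 0 from rfl]
  push_cast at h4
  generalize (u : ZMod 4) = x, (v : ZMod 4) = y at h4
  revert x y
  decide

lemma sq_sub_two_sq_of_mul_two_mul_add_eq_one {a b : ℤ} (h : b * (2 * a + b) = 1) :
    a ^ 2 - 2 * b ^ 2 = -2 := by
  rcases Int.eq_one_or_neg_one_of_mul_eq_one h with rfl | rfl <;>
    obtain rfl : a = 0 := by linarith
  all_goals norm_num

lemma sq_sub_two_sq_of_mul_two_mul_add_eq_neg_one {a b : ℤ} (h : b * (2 * a + b) = -1) :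
    a ^ 2 - 2 * b ^ 2 = -1 := by
  rcases Int.eq_one_or_neg_one_of_mul_eq_neg_one h with rfl | rfl
  · obtain rfl : a = -1 := by linarith
    norm_num
  · obtain rfl : a = 1 := by linarith
    norm_num

lemma mul_two_mul_add_emod_four_ne_two (a b : ℤ) : b * (2 * a + b) % 4 ≠ 2 := by
  rw [show b * (2 * a + b) = (a + b) ^ 2 - a ^ 2 by ring]
  exact Int.sq_sub_sq_emod_four_ne_two _ _

lemma eq_zero_and_eq_two_or_neg_two_of_mem {a b : ℤ}
    (h : (a ^ 2 - 2 * b ^ 2, b * (2 * a + b)) ∈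
      ({(4, 0), (1, 1), (3, 1), (4, 2), (4, -2), (5, -1), (7, -1)} : Set (ℤ × ℤ))) :
    b = 0 ∧ (a = 2 ∨ a = -2) := by
  have hn2 := mul_two_mul_add_emod_four_ne_two a b
  simp only [Set.mem_insert_iff, Set.mem_singleton_iff, Prod.mk.injEq] at h
  rcases h with ⟨hm, hn⟩ | ⟨hm, hn⟩ | ⟨hm, hn⟩ | ⟨hm, hn⟩ | ⟨hm, hn⟩ | ⟨hm, hn⟩ | ⟨hm, hn⟩
  · rcases mul_eq_zero.1 hn with rfl | hb
    · exact ⟨rfl, sq_eq_sq_iff_eq_or_eq_neg.1 (by linarith)⟩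
    · nlinarith [sq_nonneg a]
  · linarith [sq_sub_two_sq_of_mul_two_mul_add_eq_one hn]
  · linarith [sq_sub_two_sq_of_mul_two_mul_add_eq_one hn]
  · norm_num [hn] at hn2
  · norm_num [hn] at hn2
  · linarith [sq_sub_two_sq_of_mul_two_mul_add_eq_neg_one hn]
  · linarith [sq_sub_two_sq_of_mul_two_mul_add_eq_neg_one hn]

theorem stmt_11 (x : ℂ) (hx : ∃ a b : ℤ, x = a + b * theta)
    (h : x^2 ∈ ({4, 1+theta, 3+theta, 4+2*theta, 4-2*theta, 5-theta, 7-theta} : Set ℂ)) :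
    x^2 = 4 ∧ (x = 2 ∨ x = -2) := by
  obtain ⟨a, b, rfl⟩ := hx
  have hS : ({4, 1+theta, 3+theta, 4+2*theta, 4-2*theta, 5-theta, 7-theta} : Set ℂ) =
      (fun p : ℤ × ℤ => (p.1 : ℂ) + p.2 * theta) ''
        {(4, 0), (1, 1), (3, 1), (4, 2), (4, -2), (5, -1), (7, -1)} := by
    simp [Set.image_insert_eq, sub_eq_add_neg]
  rw [sq_intCast_add_intCast_mul theta_sq, hS] at h
  obtain ⟨rfl, ha⟩ := eq_zero_and_eq_two_or_neg_two_of_mem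
    ((Complex.intCast_add_intCast_mul_injective theta_im_ne_zero).mem_set_image.1 h)
  rcases ha with rfl | rfl <;> norm_num
end

section
/- In the figure-eight knot group G = ⟨a, b | a⁻¹bab⁻¹a = ba⁻¹bab⁻¹⟩, the three conjugate elements α = a⁻¹b², β = bαb⁻¹, and γ = b⁻¹αb generate G. -/
/-- The relator of the figure-eight knot group
`⟨a, b | a⁻¹bab⁻¹a = ba⁻¹bab⁻¹⟩` as an element of the free group on two
generators. -/
def fig8Rel : Set (FreeGroup (Fin 2)) :=
  { (FreeGroup.of 0)⁻¹ * FreeGroup.of 1 * FreeGroup.of 0 * (FreeGroup.of 1)⁻¹ * FreeGroup.of 0 *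
      (FreeGroup.of 1 * (FreeGroup.of 0)⁻¹ * FreeGroup.of 1 * FreeGroup.of 0 * (FreeGroup.of 1)⁻¹)⁻¹ }

/-- The figure-eight knot group. -/
def Fig8Group := PresentedGroup fig8Rel

instance : Group Fig8Group := by unfold Fig8Group; infer_instance

def fig8a : Fig8Group := PresentedGroup.of 0
def fig8b : Fig8Group := PresentedGroup.of 1

/-!
With `α = a⁻¹b²`, `β = bαb⁻¹`, `γ = b⁻¹αb`, the defining relation (conjugated by `a`) gives the
word identity `b = β⁻¹αγ⁻¹αβ⁻¹α²`, so `b ∈ ⟨α, β, γ⟩` and then `a = b²α⁻¹ ∈ ⟨α, β, γ⟩`.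
-/

section FigureEightRelation

variable {G : Type*} [Group G] {a b : G}

theorem eq_conjugates_word_of_fig8_relation
    (h : a⁻¹ * b * a * b⁻¹ * a = b * a⁻¹ * b * a * b⁻¹) :
    b = (b * (a⁻¹ * b ^ 2) * b⁻¹)⁻¹ * (a⁻¹ * b ^ 2) * (b⁻¹ * (a⁻¹ * b ^ 2) * b)⁻¹ *
      (a⁻¹ * b ^ 2) * (b * (a⁻¹ * b ^ 2) * b⁻¹)⁻¹ * (a⁻¹ * b ^ 2) ^ 2 := by
  have h' : a * b * a⁻¹ * b * a * b⁻¹ * a⁻¹ = b * a * b⁻¹ :=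
    calc a * b * a⁻¹ * b * a * b⁻¹ * a⁻¹ = a * (b * a⁻¹ * b * a * b⁻¹) * a⁻¹ := by group
      _ = a * (a⁻¹ * b * a * b⁻¹ * a) * a⁻¹ := by rw [h]
      _ = b * a * b⁻¹ := by group
  calc b = b⁻¹ * a * b⁻¹ * a⁻¹ * b⁻¹ * (b * a * b⁻¹) * b ^ 2 * a⁻¹ * b ^ 2 := by group
    _ = b⁻¹ * a * b⁻¹ * a⁻¹ * b⁻¹ * (a * b * a⁻¹ * b * a * b⁻¹ * a⁻¹) * b ^ 2 * a⁻¹ * b ^ 2 := by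
      rw [h']
    _ = _ := by simp only [sq]; group

theorem closure_fig8_conjugates_eq_closure_pair
    (h : a⁻¹ * b * a * b⁻¹ * a = b * a⁻¹ * b * a * b⁻¹) :
    Subgroup.closure {a⁻¹ * b ^ 2, b * (a⁻¹ * b ^ 2) * b⁻¹, b⁻¹ * (a⁻¹ * b ^ 2) * b} =
      Subgroup.closure {a, b} := by
  set H := Subgroup.closure {a⁻¹ * b ^ 2, b * (a⁻¹ * b ^ 2) * b⁻¹, b⁻¹ * (a⁻¹ * b ^ 2) * b}
  have hα : a⁻¹ * b ^ 2 ∈ H := Subgroup.subset_closure (by simp)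
  have hβ : b * (a⁻¹ * b ^ 2) * b⁻¹ ∈ H := Subgroup.subset_closure (by simp)
  have hγ : b⁻¹ * (a⁻¹ * b ^ 2) * b ∈ H := Subgroup.subset_closure (by simp)
  have hb : b ∈ H := by
    rw [eq_conjugates_word_of_fig8_relation h]
    exact mul_mem (mul_mem (mul_mem (mul_mem (mul_mem (inv_mem hβ) hα) (inv_mem hγ)) hα)
      (inv_mem hβ)) (pow_mem hα 2)
  have ha : a ∈ H := by
    rw [show a = b ^ 2 * (a⁻¹ * b ^ 2)⁻¹ by group]
    exact mul_mem (pow_mem hb 2) (inv_mem hα)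
  apply le_antisymm
  · have ha' : a ∈ Subgroup.closure {a, b} := Subgroup.subset_closure (by simp)
    have hb' : b ∈ Subgroup.closure {a, b} := Subgroup.subset_closure (by simp)
    have hα' : a⁻¹ * b ^ 2 ∈ Subgroup.closure {a, b} := mul_mem (inv_mem ha') (pow_mem hb' 2)
    rw [Subgroup.closure_le]
    rintro x (rfl | rfl | rfl)
    exacts [hα', mul_mem (mul_mem hb' hα') (inv_mem hb'), mul_mem (mul_mem (inv_mem hb') hα') hb']
  · rw [Subgroup.closure_le]
    rintro x (rfl | rfl) <;> assumption

end FigureEightRelation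

theorem fig8_relation :
    fig8a⁻¹ * fig8b * fig8a * fig8b⁻¹ * fig8a = fig8b * fig8a⁻¹ * fig8b * fig8a * fig8b⁻¹ :=
  PresentedGroup.mk_eq_mk_of_mul_inv_mem rfl

theorem closure_fig8a_fig8b : Subgroup.closure ({fig8a, fig8b} : Set Fig8Group) = ⊤ := by
  refine eq_top_iff.2 fun x _ ↦ PresentedGroup.generated_by fig8Rel _ ?_ x
  exact Fin.forall_fin_two.2 ⟨Subgroup.subset_closure (Set.mem_insert _ _),
    Subgroup.subset_closure (Set.mem_insert_of_mem _ rfl)⟩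

theorem stmt_17 :
    Subgroup.closure
        ({fig8a⁻¹ * fig8b^2,
          fig8b * (fig8a⁻¹ * fig8b^2) * fig8b⁻¹,
          fig8b⁻¹ * (fig8a⁻¹ * fig8b^2) * fig8b} : Set Fig8Group) = ⊤ := by
  rw [closure_fig8_conjugates_eq_closure_pair fig8_relation, closure_fig8a_fig8b]
end
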